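/- arXiv:2602.09909 — 2 statements merged into one kernel-verified Lean document; each statement's English description precedes it below -/
import Mathlib

section
/- Per-step fidelity monotonicity: Let φ ∈ H be a unit vector, let a family of unit vectors u i attain the supremum defining α(φ) with ⟨p(u), φ⟩ = α(φ) real and nonnegative, let W i be unitaries on EuclideanSpace ℂ (Fin (d i)) with W i e₀ⁱ = u i, and let G be the image of φ under the adjoint of ⊗ᵢ W i. Then the fidelity after the step dominates the fidelity before it: |⟨e₀, G⟩|² = α(φ)² ≥ |⟨e₀, φ⟩|². -/
open scoped InnerProductSpace

noncomputable section

/-- The product vector `p(u)` with `p(u) x = ∏ i, u i (x i)`. -/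
def prodVec {m : ℕ} (d : Fin m → ℕ) (u : ∀ i, EuclideanSpace ℂ (Fin (d i))) :
    EuclideanSpace ℂ (∀ i, Fin (d i)) :=
  WithLp.toLp 2 (fun x => ∏ i, u i (x i))

/-- The entanglement eigenvalue `α(φ)`. -/
def entEig {m : ℕ} (d : Fin m → ℕ) (φ : EuclideanSpace ℂ (∀ i, Fin (d i))) : ℝ :=
  sSup { r : ℝ | ∃ u : ∀ i, EuclideanSpace ℂ (Fin (d i)),
    (∀ i, ‖u i‖ = 1) ∧ r = ‖⟪prodVec d u, φ⟫_ℂ‖ }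

lemma norm_prodVec_one {m : ℕ} (d : Fin m → ℕ) (u : ∀ i, EuclideanSpace ℂ (Fin (d i)))
    (hu : ∀ i, ‖u i‖ = 1) : ‖prodVec d u‖ = 1 := by
  rw [EuclideanSpace.norm_eq]
  have h1 : ∀ x : ∀ i, Fin (d i), ‖prodVec d u x‖ ^ 2 = ∏ i, ‖u i (x i)‖ ^ 2 := by
    intro x
    show ‖∏ i, u i (x i)‖ ^ 2 = _
    rw [norm_prod, ← Finset.prod_pow]
  have h2 : ∑ x : ∀ i, Fin (d i), ∏ i, ‖u i (x i)‖ ^ 2 = ∏ i, ∑ j, ‖u i j‖ ^ 2 := by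
    rw [Finset.prod_univ_sum, Fintype.piFinset_univ]
  have h3 : ∀ i, ∑ j, ‖u i j‖ ^ 2 = 1 := by
    intro i
    have := EuclideanSpace.norm_eq (u i)
    rw [hu i] at this
    have h4 : (0:ℝ) ≤ ∑ j, ‖u i j‖ ^ 2 := Finset.sum_nonneg fun j _ => sq_nonneg _
    nlinarith [Real.sq_sqrt h4, Real.sqrt_nonneg (∑ j, ‖u i j‖ ^ 2)]
  have h5 : ∑ x : ∀ i, Fin (d i), ‖prodVec d u x‖ ^ 2 = 1 := by
    simp only [h1]; rw [h2]; exact Finset.prod_eq_one fun i _ => h3 i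
  rw [h5, Real.sqrt_one]

lemma prodVec_single {m : ℕ} (d : Fin m → ℕ) [∀ i, NeZero (d i)] :
    prodVec d (fun i => (EuclideanSpace.single 0 1 : EuclideanSpace ℂ (Fin (d i))))
      = EuclideanSpace.single (fun i => (0 : Fin (d i))) (1 : ℂ) := by
  ext x
  show (∏ i, (EuclideanSpace.single 0 1 : EuclideanSpace ℂ (Fin (d i))) (x i)) = _
  rw [EuclideanSpace.single_apply]
  by_cases h : x = fun i => 0
  · subst h; simp [EuclideanSpace.single_apply]
  · rw [if_neg h]
    obtain ⟨i, hi⟩ : ∃ i, x i ≠ 0 := by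
      by_contra hc; push_neg at hc; exact h (funext hc)
    exact Finset.prod_eq_zero (Finset.mem_univ i) (by simp [EuclideanSpace.single_apply, hi])

/-- Per-step fidelity monotonicity: with the monotone gauge,
`|⟨e₀, G⟩|² = α(φ)² ≥ |⟨e₀, φ⟩|²`. -/
theorem per_step_fidelity_monotonicity {m : ℕ}
    (d : Fin m → ℕ) [∀ i, NeZero (d i)]
    (φ : EuclideanSpace ℂ (∀ i, Fin (d i))) (hφ : ‖φ‖ = 1)
    (u : ∀ i, EuclideanSpace ℂ (Fin (d i))) (hu : ∀ i, ‖u i‖ = 1)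
    (hmax : ⟪prodVec d u, φ⟫_ℂ = (entEig d φ : ℂ))
    (W : ∀ i, EuclideanSpace ℂ (Fin (d i)) ≃ₗᵢ[ℂ] EuclideanSpace ℂ (Fin (d i)))
    (hW : ∀ i, W i (EuclideanSpace.single 0 1) = u i)
    (G : EuclideanSpace ℂ (∀ i, Fin (d i)))
    (hG : ∀ x, G x = ⟪prodVec d (fun i => W i (EuclideanSpace.single (x i) 1)), φ⟫_ℂ) :
    ‖⟪EuclideanSpace.single (fun i => (0 : Fin (d i))) (1 : ℂ), G⟫_ℂ‖ ^ 2
        = entEig d φ ^ 2 ∧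
      ‖⟪EuclideanSpace.single (fun i => (0 : Fin (d i))) (1 : ℂ), φ⟫_ℂ‖ ^ 2
        ≤ entEig d φ ^ 2 := by
  have hsingle : ∀ i, ‖(EuclideanSpace.single 0 1 : EuclideanSpace ℂ (Fin (d i)))‖ = 1 := by
    intro i; rw [EuclideanSpace.norm_single]; norm_num
  have hpart1 : ⟪EuclideanSpace.single (fun i => (0 : Fin (d i))) (1 : ℂ), G⟫_ℂ
      = (entEig d φ : ℂ) := by
    rw [EuclideanSpace.inner_single_left]
    rw [hG]
    have : (fun i => W i (EuclideanSpace.single ((fun j => (0 : Fin (d j))) i) 1)) = u := by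
      funext i; exact hW i
    rw [this, hmax]
    simp
  have hbdd : BddAbove { r : ℝ | ∃ v : ∀ i, EuclideanSpace ℂ (Fin (d i)),
      (∀ i, ‖v i‖ = 1) ∧ r = ‖⟪prodVec d v, φ⟫_ℂ‖ } := by
    refine ⟨1, ?_⟩
    rintro r ⟨v, hv, rfl⟩
    calc ‖⟪prodVec d v, φ⟫_ℂ‖ ≤ ‖prodVec d v‖ * ‖φ‖ := norm_inner_le_norm _ _
    _ = 1 := by rw [hφ, norm_prodVec_one d v hv]; ring
  have hmem : ‖⟪EuclideanSpace.single (fun i => (0 : Fin (d i))) (1 : ℂ), φ⟫_ℂ‖ ≤ entEig d φ := by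
    apply le_csSup hbdd
    exact ⟨fun i => EuclideanSpace.single 0 1, hsingle, by rw [prodVec_single]⟩
  refine ⟨?_, ?_⟩
  · rw [hpart1, Complex.norm_real]
    rw [Real.norm_eq_abs, sq_abs]
  · exact pow_le_pow_left₀ (norm_nonneg _) hmem 2
end
end

section
/- Local-unitary invariance of the entanglement eigenvalue: Let U i be unitary operators on EuclideanSpace ℂ (Fin (d i)) for each i, and let Ψ ∈ H be the image of φ ∈ H under the local tensor operator ⊗ᵢ U i (i.e., Ψ x = Σ_y (∏ i, (U i)_{x i, y i}) φ y). Then α(Ψ) = α(φ). In particular, the geometric entanglement 1 − α² of the Tucker core state (obtained from φ by applying the adjoints of local block unitaries) is never greater than that of the original state. -/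
open scoped InnerProductSpace

noncomputable section

lemma inner_prodVec_local {m : ℕ}
    (d : Fin m → ℕ)
    (U : ∀ i, EuclideanSpace ℂ (Fin (d i)) ≃ₗᵢ[ℂ] EuclideanSpace ℂ (Fin (d i)))
    (φ Ψ : EuclideanSpace ℂ (∀ i, Fin (d i)))
    (hΨ : ∀ x, Ψ x = ∑ y : ∀ i, Fin (d i),
      (∏ i, (U i (EuclideanSpace.single (y i) 1)) (x i)) * φ y)
    (u : ∀ i, EuclideanSpace ℂ (Fin (d i))) :
    ⟪prodVec d u, Ψ⟫_ℂ = ⟪prodVec d (fun i => (U i).symm (u i)), φ⟫_ℂ := by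
  have hinner : ∀ (i : Fin m) (j : Fin (d i)),
      (∑ k, (starRingEnd ℂ) (u i k) * (U i (EuclideanSpace.single j 1)) k)
        = (starRingEnd ℂ) (((U i).symm (u i)) j) := by
    intro i j
    have h1 : (∑ k, (starRingEnd ℂ) (u i k) * (U i (EuclideanSpace.single j 1)) k)
        = ⟪u i, U i (EuclideanSpace.single j (1:ℂ))⟫_ℂ := by
      rw [PiLp.inner_apply]
      simp [RCLike.inner_apply]
      exact Finset.sum_congr rfl fun _ _ => mul_comm _ _
    have h2 : ⟪u i, U i (EuclideanSpace.single j (1:ℂ))⟫_ℂ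
        = ⟪(U i).symm (u i), EuclideanSpace.single j (1:ℂ)⟫_ℂ := by
      conv_lhs => rw [show u i = U i ((U i).symm (u i)) by simp]
      rw [LinearIsometryEquiv.inner_map_map]
    rw [h1, h2, EuclideanSpace.inner_single_right]
    ring
  rw [PiLp.inner_apply, PiLp.inner_apply]
  simp only [RCLike.inner_apply]
  simp only [mul_comm (Ψ.ofLp _), mul_comm (φ.ofLp _)]
  calc ∑ x : ∀ i, Fin (d i), (starRingEnd ℂ) (prodVec d u x) * Ψ x
      = ∑ x : ∀ i, Fin (d i), ∑ y : ∀ i, Fin (d i), (∏ i, (starRingEnd ℂ) (u i (x i)))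
          * ((∏ i, (U i (EuclideanSpace.single (y i) 1)) (x i)) * φ y) := by
        refine Finset.sum_congr rfl fun x _ => ?_
        rw [hΨ x, Finset.mul_sum]
        simp [prodVec, map_prod]
    _ = ∑ y : ∀ i, Fin (d i), (∑ x : ∀ i, Fin (d i), ∏ i,
          ((starRingEnd ℂ) (u i (x i)) * (U i (EuclideanSpace.single (y i) 1)) (x i))) * φ y := by
        rw [Finset.sum_comm]
        refine Finset.sum_congr rfl fun y _ => ?_
        rw [Finset.sum_mul]
        refine Finset.sum_congr rfl fun x _ => ?_
        rw [← mul_assoc, ← Finset.prod_mul_distrib]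
    _ = ∑ y : ∀ i, Fin (d i), (∏ i, ∑ k,
          ((starRingEnd ℂ) (u i k) * (U i (EuclideanSpace.single (y i) 1)) k)) * φ y := by
        refine Finset.sum_congr rfl fun y _ => ?_
        congr 1
        rw [Finset.prod_univ_sum (fun _ => Finset.univ)
          (fun i k => (starRingEnd ℂ) (u i k) * (U i (EuclideanSpace.single (y i) 1)) k),
          Fintype.piFinset_univ]
    _ = ∑ y : ∀ i, Fin (d i), (starRingEnd ℂ) (prodVec d (fun i => (U i).symm (u i)) y) * φ y := by
        refine Finset.sum_congr rfl fun y _ => ?_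
        simp only [hinner, prodVec, map_prod, WithLp.ofLp_toLp]

/-- Local-unitary invariance of the entanglement eigenvalue: if `Ψ` is the image of `φ`
under the local tensor operator `⊗ᵢ U i`, i.e.
`Ψ x = Σ_y (∏ i, (U i)_{x i, y i}) * φ y`, then `α(Ψ) = α(φ)`. -/
theorem entEig_local_unitary_invariance {m : ℕ}
    (d : Fin m → ℕ) [∀ i, NeZero (d i)]
    (U : ∀ i, EuclideanSpace ℂ (Fin (d i)) ≃ₗᵢ[ℂ] EuclideanSpace ℂ (Fin (d i)))
    (φ Ψ : EuclideanSpace ℂ (∀ i, Fin (d i)))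
    (hΨ : ∀ x, Ψ x = ∑ y : ∀ i, Fin (d i),
      (∏ i, (U i (EuclideanSpace.single (y i) 1)) (x i)) * φ y) :
    entEig d Ψ = entEig d φ := by
  unfold entEig
  congr 1
  ext r
  constructor
  · rintro ⟨u, hu, rfl⟩
    exact ⟨fun i => (U i).symm (u i), fun i => by simp [hu i],
      by rw [inner_prodVec_local d U φ Ψ hΨ u]⟩
  · rintro ⟨u, hu, rfl⟩
    refine ⟨fun i => U i (u i), fun i => by simp [hu i], ?_⟩
    rw [inner_prodVec_local d U φ Ψ hΨ (fun i => U i (u i))]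
    simp
end
end
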